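/- Every closed PGA term is derivably equal (using axioms PGA1–PGA4) to a term in canonical form, i.e. a term of the form P or P ; Q^ω where P and Q are closed PGA terms not containing the repetition operator. -/
import Mathlib


/-- PGA terms: instruction constants, concatenation, repetition. -/
inductive PGA (I : Type) : Type
  | inst : I → PGA I
  | cat : PGA I → PGA I → PGA I
  | rep : PGA I → PGA I

/-- `PGA.pow x n` is the power `x^(n+1)`: `x^1 = x`, `x^(k+1) = x ; x^k`. -/
def PGA.pow {I : Type} (x : PGA I) : ℕ → PGA I
  | 0 => x
  | n + 1 => PGA.cat x (x.pow n)

/-- Derivable equality of PGA terms: the smallest congruence generated by PGA1–PGA4. -/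
inductive PGAEq {I : Type} : PGA I → PGA I → Prop
  | refl (x : PGA I) : PGAEq x x
  | symm {x y : PGA I} : PGAEq x y → PGAEq y x
  | trans {x y z : PGA I} : PGAEq x y → PGAEq y z → PGAEq x z
  | cat_congr {x x' y y' : PGA I} : PGAEq x x' → PGAEq y y' → PGAEq (PGA.cat x y) (PGA.cat x' y')
  | rep_congr {x x' : PGA I} : PGAEq x x' → PGAEq (PGA.rep x) (PGA.rep x')
  | pga1 (x y z : PGA I) : PGAEq (PGA.cat (PGA.cat x y) z) (PGA.cat x (PGA.cat y z))
  | pga2 (x : PGA I) (n : ℕ) : PGAEq (PGA.rep (x.pow n)) (PGA.rep x)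
  | pga3 (x y : PGA I) : PGAEq (PGA.cat (PGA.rep x) y) (PGA.rep x)
  | pga4 (x y : PGA I) : PGAEq (PGA.rep (PGA.cat x y)) (PGA.cat x (PGA.rep (PGA.cat y x)))

/-- A PGA term is repetition-free if it does not contain the repetition operator. -/
def repFree {I : Type} : PGA I → Prop
  | PGA.inst _ => True
  | PGA.cat x y => repFree x ∧ repFree y
  | PGA.rep _ => False

/-- `x^ω = x ; x^ω`. -/
lemma rep_unfold {I : Type} (x : PGA I) : PGAEq (PGA.rep x) (PGA.cat x (PGA.rep x)) := by
  have h1 : PGAEq (PGA.rep x) (PGA.rep (x.pow 1)) := PGAEq.symm (PGAEq.pga2 x 1)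
  have h2 : PGAEq (PGA.rep (PGA.cat x x)) (PGA.cat x (PGA.rep (PGA.cat x x))) := PGAEq.pga4 x x
  exact h1.trans (h2.trans (PGAEq.cat_congr (PGAEq.refl x) (PGAEq.pga2 x 1)))

/-- `(x^ω)^ω = x^ω`. -/
lemma rep_rep {I : Type} (x : PGA I) : PGAEq (PGA.rep (PGA.rep x)) (PGA.rep x) :=
  (rep_unfold (PGA.rep x)).trans (PGAEq.pga3 x (PGA.rep (PGA.rep x)))

/-- Every closed PGA term is derivably equal to a term in canonical form,
i.e. of the form `P` or `P ; Q^ω` with `P`, `Q` repetition-free. -/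
theorem canonical_form {I : Type} (x : PGA I) :
    (∃ P : PGA I, repFree P ∧ PGAEq x P) ∨
    (∃ P Q : PGA I, repFree P ∧ repFree Q ∧ PGAEq x (PGA.cat P (PGA.rep Q))) := by
  induction x with
  | inst i => exact Or.inl ⟨PGA.inst i, trivial, PGAEq.refl _⟩
  | cat a b iha ihb =>
    rcases iha with ⟨P, hP, hPe⟩ | ⟨P, Q, hP, hQ, hPe⟩
    · rcases ihb with ⟨R, hR, hRe⟩ | ⟨R, S, hR, hS, hRe⟩
      · exact Or.inl ⟨PGA.cat P R, ⟨hP, hR⟩, PGAEq.cat_congr hPe hRe⟩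
      · exact Or.inr ⟨PGA.cat P R, S, ⟨hP, hR⟩, hS,
          (PGAEq.cat_congr hPe hRe).trans (PGAEq.symm (PGAEq.pga1 P R (PGA.rep S)))⟩
    · -- a ~ P ; Q^ω, so a ; b ~ P ; (Q^ω ; b) ~ P ; Q^ω
      refine Or.inr ⟨P, Q, hP, hQ, ?_⟩
      have h1 : PGAEq (PGA.cat a b) (PGA.cat (PGA.cat P (PGA.rep Q)) b) :=
        PGAEq.cat_congr hPe (PGAEq.refl b)
      exact h1.trans ((PGAEq.pga1 P (PGA.rep Q) b).trans
        (PGAEq.cat_congr (PGAEq.refl P) (PGAEq.pga3 Q b)))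
  | rep a iha =>
    rcases iha with ⟨P, hP, hPe⟩ | ⟨P, Q, hP, hQ, hPe⟩
    · exact Or.inr ⟨P, P, hP, hP, (PGAEq.rep_congr hPe).trans (rep_unfold P)⟩
    · refine Or.inr ⟨P, Q, hP, hQ, ?_⟩
      have h1 : PGAEq (PGA.rep a) (PGA.rep (PGA.cat P (PGA.rep Q))) := PGAEq.rep_congr hPe
      have h2 := PGAEq.pga4 P (PGA.rep Q)
      have h3 : PGAEq (PGA.rep (PGA.cat (PGA.rep Q) P)) (PGA.rep Q) :=
        (PGAEq.rep_congr (PGAEq.pga3 Q P)).trans (rep_rep Q)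
      exact h1.trans (h2.trans (PGAEq.cat_congr (PGAEq.refl P) h3))
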